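/- arXiv:2204.08422 — 2 statements merged into one kernel-verified Lean document; each statement's English description precedes it below -/
import Mathlib

section
/- Let F₁ and F₂ be algebraically closed fields containing a field K, and let A, B be finite dimensional K-algebras. Then A ⊗_K F₁ ≅ B ⊗_K F₁ as F₁-algebras if and only if A ⊗_K F₂ ≅ B ⊗_K F₂ as F₂-algebras. -/
/-!
Fix `K`-bases of `A` and `B` (of the same size, otherwise both sides fail for dimension reasons),
with structure constants `cA`, `cB`. For any `K`-algebra `L`, an `L`-algebra isomorphism
`L ⊗ A ≃ L ⊗ B` is the same as a matrix `M` over `L` with `det M` a unit that carries `cA` to `cB`,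
i.e. a solution in `L` of a fixed finite system of polynomial equations over `K` (one extra
variable inverts `det M`). By Zariski's lemma, a system over `K` that has a solution in some
nonzero `K`-algebra has one in `R ⧸ m` for a maximal ideal `m` of its coordinate ring `R`, a finite
extension of `K`, which embeds into every algebraically closed extension of `K`.
-/

open TensorProduct MvPolynomial

theorem Algebra.FiniteType.nonempty_algHom_of_isAlgClosed (K R F : Type*) [Field K]
    [CommRing R] [Nontrivial R] [Algebra K R] [Algebra.FiniteType K R]
    [Field F] [IsAlgClosed F] [Algebra K F] : Nonempty (R →ₐ[K] F) := by
  obtain ⟨m, hm⟩ := Ideal.exists_maximal R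
  let := Ideal.Quotient.field m
  have : Module.Finite K (R ⧸ m) := finite_of_finite_type_of_isJacobsonRing K (R ⧸ m)
  exact ⟨IsAlgClosed.lift.comp (Ideal.Quotient.mkₐ K m)⟩

theorem MvPolynomial.exists_aeval_eq_zero_of_isAlgClosed {K σ L : Type*} (F : Type*) [Field K]
    [Finite σ] [CommRing L] [Nontrivial L] [Algebra K L] [Field F] [IsAlgClosed F] [Algebra K F]
    {S : Set (MvPolynomial σ K)} (h : ∃ x : σ → L, ∀ p ∈ S, aeval x p = 0) :
    ∃ x : σ → F, ∀ p ∈ S, aeval x p = 0 := by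
  obtain ⟨x, hx⟩ := h
  have hS : Ideal.span S ≠ ⊤ := fun htop ↦ RingHom.ker_ne_top (aeval x) <|
    top_le_iff.mp (htop ▸ Ideal.span_le.mpr fun p hp ↦ hx p hp)
  have := Ideal.Quotient.nontrivial_iff.mpr hS
  obtain ⟨φ⟩ := Algebra.FiniteType.nonempty_algHom_of_isAlgClosed K
    (MvPolynomial σ K ⧸ Ideal.span S) F
  refine ⟨fun i ↦ φ (Ideal.Quotient.mk _ (X i)), fun p hp ↦ ?_⟩
  have haeval : aeval (fun i ↦ φ (Ideal.Quotient.mk _ (X i))) = φ.comp (Ideal.Quotient.mkₐ K _) :=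
    algHom_ext fun i ↦ by simp
  rw [haeval, AlgHom.comp_apply, Ideal.Quotient.mkₐ_eq_mk,
    Ideal.Quotient.eq_zero_iff_mem.mpr (Ideal.subset_span hp), map_zero]

namespace Module.Basis

variable {R A ι : Type*} [CommSemiring R] [NonUnitalNonAssocSemiring A] [Module R A]
  [SMulCommClass R A A] [IsScalarTower R A A]

noncomputable def structConst (b : Basis ι R A) (i j k : ι) : R := b.repr (b i * b j) k

theorem repr_mul [Fintype ι] (b : Basis ι R A) (x y : A) (k : ι) :
    b.repr (x * y) k = ∑ p, ∑ q, b.repr x p * b.repr y q * b.structConst p q k := by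
  conv_lhs => rw [← b.sum_repr x, ← b.sum_repr y]
  simp only [Finset.sum_mul, Finset.mul_sum, smul_mul_smul_comm, map_sum, map_smul,
    Finsupp.coe_finsetSum, Finset.sum_apply, Finsupp.smul_apply, smul_eq_mul, structConst]
  exact Finset.sum_comm

theorem structConst_baseChange (F : Type*) [CommSemiring F] [Algebra R F] (b : Basis ι R A) :
    (b.baseChange F).structConst = fun i j k ↦ algebraMap R F (b.structConst i j k) := by
  ext i j k
  rw [structConst, baseChange_apply, baseChange_apply, Algebra.TensorProduct.tmul_mul_tmul,
    one_mul, baseChange_repr_tmul, Algebra.algebraMap_eq_smul_one, structConst]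

end Module.Basis

def Matrix.IsMulMatrix {R ι κ : Type*} [CommSemiring R] [Fintype ι] [Fintype κ]
    (cA : ι → ι → ι → R) (cB : κ → κ → κ → R) (M : Matrix κ ι R) : Prop :=
  ∀ i j k, ∑ l, cA i j l * M k l = ∑ p, ∑ q, M p i * M q j * cB p q k

theorem LinearMap.map_mul_iff_isMulMatrix {R A B ι κ : Type*} [CommSemiring R]
    [NonUnitalNonAssocSemiring A] [Module R A] [SMulCommClass R A A] [IsScalarTower R A A]
    [NonUnitalNonAssocSemiring B] [Module R B] [SMulCommClass R B B] [IsScalarTower R B B]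
    [Fintype ι] [Fintype κ] [DecidableEq ι] (bA : Module.Basis ι R A) (bB : Module.Basis κ R B)
    (f : A →ₗ[R] B) : (∀ x y, f (x * y) = f x * f y) ↔
      (LinearMap.toMatrix bA bB f).IsMulMatrix bA.structConst bB.structConst := by
  have hbil : (∀ x y, f (x * y) = f x * f y) ↔
      (LinearMap.mul R A).compr₂ f = ((LinearMap.mul R B).comp f).compl₂ f :=
    ⟨fun h ↦ by ext x y; exact h x y, fun h x y ↦ LinearMap.congr_fun₂ h x y⟩
  have hmul : ∀ i j, f (bA i * bA j) = ∑ l, bA.structConst i j l • f (bA l) := fun i j ↦ by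
    conv_lhs => rw [← bA.sum_repr (bA i * bA j)]
    simp only [map_sum, map_smul, Module.Basis.structConst]
  rw [hbil, LinearMap.ext_iff_basis bA bA]
  simp only [compr₂_apply, mul_apply', compl₂_apply, comp_apply, bB.ext_elem_iff,
    bB.repr_mul, hmul, map_sum, map_smul, Finsupp.coe_finsetSum, Finset.sum_apply,
    Finsupp.smul_apply, smul_eq_mul, ← LinearMap.toMatrix_apply]
  rfl

section MulLinearEquiv

variable {R A B ι : Type*} [CommRing R]
  [NonUnitalNonAssocRing A] [Module R A] [SMulCommClass R A A] [IsScalarTower R A A]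
  [NonUnitalNonAssocRing B] [Module R B] [SMulCommClass R B B] [IsScalarTower R B B]
  [Fintype ι] [DecidableEq ι]

theorem exists_mulLinearEquiv_iff (bA : Module.Basis ι R A) (bB : Module.Basis ι R B) :
    (∃ e : A ≃ₗ[R] B, ∀ x y, e (x * y) = e x * e y) ↔
      ∃ M : Matrix ι ι R, IsUnit M.det ∧ M.IsMulMatrix bA.structConst bB.structConst := by
  constructor
  · rintro ⟨e, he⟩
    exact ⟨LinearMap.toMatrix bA bB e, e.isUnit_det bA bB,
      (LinearMap.map_mul_iff_isMulMatrix bA bB e.toLinearMap).mp he⟩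
  · rintro ⟨M, hdet, hM⟩
    rw [← LinearMap.toMatrix_toLin bA bB M] at hdet hM
    exact ⟨.ofIsUnitDet hdet, (LinearMap.map_mul_iff_isMulMatrix bA bB _).mpr hM⟩

noncomputable def mulMatrixSystem (cA cB : ι → ι → ι → R) :
    Set (MvPolynomial (Option (ι × ι)) R) :=
  let M : Matrix ι ι (MvPolynomial (Option (ι × ι)) R) := .of fun k l ↦ X (some (k, l))
  insert (X none * M.det - 1)
    (Set.range fun ((i, j, k) : ι × ι × ι) ↦
      ∑ l, C (cA i j l) * M k l - ∑ p, ∑ q, M p i * M q j * C (cB p q k))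

theorem exists_aeval_mulMatrixSystem_iff (cA cB : ι → ι → ι → R) (L : Type*) [CommRing L]
    [Algebra R L] : (∃ x : Option (ι × ι) → L, ∀ P ∈ mulMatrixSystem cA cB, aeval x P = 0) ↔
      ∃ M : Matrix ι ι L, IsUnit M.det ∧
        M.IsMulMatrix (fun i j k ↦ algebraMap R L (cA i j k))
          (fun i j k ↦ algebraMap R L (cB i j k)) := by
  have key : ∀ x : Option (ι × ι) → L, (∀ P ∈ mulMatrixSystem cA cB, aeval x P = 0) ↔
      x none * (Matrix.of fun k l ↦ x (some (k, l))).det = 1 ∧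
      (Matrix.of fun k l ↦ x (some (k, l))).IsMulMatrix (fun i j k ↦ algebraMap R L (cA i j k))
          (fun i j k ↦ algebraMap R L (cB i j k)) := by
    intro x
    have hdet : aeval x (Matrix.of fun k l ↦ (X (some (k, l)) : MvPolynomial _ R)).det =
        (Matrix.of fun k l ↦ x (some (k, l))).det := by
      rw [AlgHom.map_det]
      congr 1
      ext k l
      simp
    simp only [mulMatrixSystem, Set.forall_mem_insert, Set.forall_mem_range, Prod.forall, map_sub,
      map_mul, map_one, map_sum, hdet, aeval_X, aeval_C, Matrix.of_apply, sub_eq_zero]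
    rfl
  simp only [key]
  constructor
  · rintro ⟨x, hunit, hM⟩
    exact ⟨_, IsUnit.of_mul_eq_one_right _ hunit, hM⟩
  · rintro ⟨M, ⟨u, hu⟩, hM⟩
    refine ⟨fun o ↦ o.elim ↑u⁻¹ fun kl ↦ M kl.1 kl.2, ?_, hM⟩
    simp only [Option.elim_none, Option.elim_some, Units.inv_mul_eq_one]
    exact hu

theorem exists_mulLinearEquiv_baseChange_iff (F : Type*) [CommRing F] [Algebra R F]
    (bA : Module.Basis ι R A) (bB : Module.Basis ι R B) :
    (∃ e : F ⊗[R] A ≃ₗ[F] F ⊗[R] B, ∀ x y, e (x * y) = e x * e y) ↔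
      ∃ x : Option (ι × ι) → F,
        ∀ P ∈ mulMatrixSystem bA.structConst bB.structConst, aeval x P = 0 := by
  rw [exists_mulLinearEquiv_iff (bA.baseChange F) (bB.baseChange F),
    exists_aeval_mulMatrixSystem_iff, bA.structConst_baseChange F, bB.structConst_baseChange F]

end MulLinearEquiv

theorem Module.finrank_eq_of_baseChange_linearEquiv {K F A B : Type*} [Field K] [Field F]
    [Algebra K F] [AddCommGroup A] [Module K A] [AddCommGroup B] [Module K B]
    (e : F ⊗[K] A ≃ₗ[F] F ⊗[K] B) : finrank K A = finrank K B := by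
  rw [← finrank_baseChange (R := F), e.finrank_eq, finrank_baseChange]

/-- Let `F₁` and `F₂` be algebraically closed fields containing a field `K`, and
let `A`, `B` be finite-dimensional (not necessarily associative) `K`-algebras. Then
`A ⊗_K F₁ ≅ B ⊗_K F₁` as `F₁`-algebras iff `A ⊗_K F₂ ≅ B ⊗_K F₂` as `F₂`-algebras. -/
theorem stmt15 (K F₁ F₂ : Type u) [Field K]
    [Field F₁] [IsAlgClosed F₁] [Algebra K F₁] [Field F₂] [IsAlgClosed F₂] [Algebra K F₂]
    (A B : Type u)
    [NonUnitalNonAssocRing A] [Module K A] [SMulCommClass K A A] [IsScalarTower K A A]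
    [NonUnitalNonAssocRing B] [Module K B] [SMulCommClass K B B] [IsScalarTower K B B]
    [FiniteDimensional K A] [FiniteDimensional K B] :
    (∃ e : (F₁ ⊗[K] A) ≃ₗ[F₁] (F₁ ⊗[K] B), ∀ x y, e (x * y) = e x * e y) ↔
      ∃ e : (F₂ ⊗[K] A) ≃ₗ[F₂] (F₂ ⊗[K] B), ∀ x y, e (x * y) = e x * e y := by
  by_cases hd : Module.finrank K A = Module.finrank K B
  · let bA := Module.finBasis K A
    let bB := (Module.finBasis K B).reindex (finCongr hd.symm)
    rw [exists_mulLinearEquiv_baseChange_iff F₁ bA bB,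
      exists_mulLinearEquiv_baseChange_iff F₂ bA bB]
    exact ⟨exists_aeval_eq_zero_of_isAlgClosed F₂, exists_aeval_eq_zero_of_isAlgClosed F₁⟩
  · exact iff_of_false (fun ⟨e, _⟩ ↦ hd (Module.finrank_eq_of_baseChange_linearEquiv e))
      (fun ⟨e, _⟩ ↦ hd (Module.finrank_eq_of_baseChange_linearEquiv e))
end

section
/- Let F₁, F₂ be fields containing an algebraically closed field K, and let A, B be K-algebras of the same dimension ω with |K| > ω. Then A ⊗_K F₁ ≅ B ⊗_K F₁ as F₁-algebras if and only if A ⊗_K F₂ ≅ B ⊗_K F₂ as F₂-algebras. -/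
/-!
An isomorphism `e : F ⊗ A ≃ F ⊗ B` of `F`-algebras involves, on bases of `A` and `B`, fewer than
`|K|` coefficients of `e` and `e⁻¹`. They generate a `K`-subalgebra `R ⊆ F` with fewer than `|K|`
generators, so every residue field of `R` is algebraic over `K` (by Zariski's lemma when there
are finitely many generators, and otherwise because a transcendental `x` would give `|K|`
linearly independent elements `(x - a)⁻¹`), hence equal to `K`. A `K`-point `φ : R → K`
specializes the coefficients of `e` and `e⁻¹` to mutually inverse algebra isomorphisms
`A ≃ B`. Hence `F ⊗ A ≃ F ⊗ B` iff `A ≃ B`, for every field `F ⊇ K`.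
-/

open TensorProduct Cardinal

universe u

theorem Cardinal.mk_iUnion_finset_lt {α ι : Type u} {c : Cardinal} (hc : ℵ₀ ≤ c)
    (s : ι → Finset α) (hι : #ι < c) : #(⋃ i, (s i : Set α)) < c := by
  rcases finite_or_infinite ι with hfin | hinf
  · exact ((Set.finite_iUnion fun i => (s i).finite_toSet).lt_aleph0).trans_le hc
  calc #(⋃ i, (s i : Set α)) ≤ #ι * ⨆ i, #(s i : Set α) := mk_iUnion_le _
    _ ≤ #ι * ℵ₀ := by
        gcongr
        exact ciSup_le' fun i => (s i).finite_toSet.lt_aleph0.le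
    _ = #ι := mul_aleph0_eq (infinite_iff.1 hinf)
    _ < c := hι

theorem Algebra.IsAlgebraic.of_rank_lt_mk {K L : Type u} [Field K] [Field L] [Algebra K L]
    (h : Module.rank K L < #K) : Algebra.IsAlgebraic K L := by
  by_contra hL
  obtain ⟨x, hx⟩ := (Algebra.transcendental_iff_not_isAlgebraic (R := K) (A := L)).2 hL
  exact h.not_ge hx.linearIndependent_sub_inv.cardinal_le_rank

theorem nonempty_algHom_adjoin_of_mk_lt {K S : Type u} [Field K] [IsAlgClosed K] [CommRing S]
    [Nontrivial S] [Algebra K S] {E : Set S} (hE : #E < #K) :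
    Nonempty (Algebra.adjoin K E →ₐ[K] K) := by
  obtain ⟨m, hm⟩ := Ideal.exists_maximal (Algebra.adjoin K E)
  let := Ideal.Quotient.field m
  have : Algebra.IsAlgebraic K (Algebra.adjoin K E ⧸ m) := by
    rcases E.finite_or_infinite with hfin | hinf
    · have : Algebra.FiniteType K (Algebra.adjoin K E) := .adjoin_of_finite hfin
      have : Algebra.FiniteType K (Algebra.adjoin K E ⧸ m) :=
        .of_surjective (Ideal.Quotient.mkₐ K m) (Ideal.Quotient.mkₐ_surjective K m)
      have := finite_of_finite_type_of_isJacobsonRing K (Algebra.adjoin K E ⧸ m)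
      infer_instance
    · refine .of_rank_lt_mk (lt_of_le_of_lt ?_ hE)
      calc Module.rank K (Algebra.adjoin K E ⧸ m)
          ≤ Module.rank K (Algebra.adjoin K E) :=
            (Ideal.Quotient.mkₐ K m).toLinearMap.rank_le_of_surjective
              (Ideal.Quotient.mkₐ_surjective K m)
        _ ≤ max #E ℵ₀ := Algebra.rank_adjoin_le E
        _ = #E := max_eq_left (infinite_iff.1 hinf.to_subtype)
  have : Algebra.IsIntegral K (Algebra.adjoin K E ⧸ m) := Algebra.IsAlgebraic.isIntegral
  let residueEquiv : K ≃ₐ[K] Algebra.adjoin K E ⧸ m :=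
    .ofBijective (Algebra.ofId K _) IsAlgClosed.algebraMap_bijective_of_isIntegral
  exact ⟨residueEquiv.symm.toAlgHom.comp (Ideal.Quotient.mkₐ K m)⟩

theorem TensorProduct.map_mul_of_map_tmul_mul_tmul {K S M P G : Type*} [CommSemiring K]
    [NonUnitalNonAssocSemiring S] [Module K S] [SMulCommClass K S S] [IsScalarTower K S S]
    [NonUnitalNonAssocSemiring M] [Module K M] [SMulCommClass K M M] [IsScalarTower K M M]
    [NonUnitalNonAssocSemiring P] [FunLike G (S ⊗[K] M) P] [AddMonoidHomClass G (S ⊗[K] M) P]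
    (L : G) (h : ∀ s m s' m', L (s ⊗ₜ m * s' ⊗ₜ m') = L (s ⊗ₜ m) * L (s' ⊗ₜ m'))
    (x y : S ⊗[K] M) : L (x * y) = L x * L y := by
  induction x using TensorProduct.induction_on with
  | zero => simp
  | add x₁ x₂ h₁ h₂ => simp only [add_mul, map_add, h₁, h₂]
  | tmul s m =>
    induction y using TensorProduct.induction_on with
    | zero => simp
    | add y₁ y₂ h₁ h₂ => simp only [mul_add, map_add, h₁, h₂]
    | tmul s' m' => exact h s m s' m'

theorem AlgHom.rTensor_smul {K S T M : Type*} [CommSemiring K] [CommSemiring S] [Algebra K S]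
    [CommSemiring T] [Algebra K T] [AddCommMonoid M] [Module K M] (f : S →ₐ[K] T) (s : S)
    (t : S ⊗[K] M) : f.toLinearMap.rTensor M (s • t) = f s • f.toLinearMap.rTensor M t := by
  induction t using TensorProduct.induction_on with
  | zero => simp
  | add t₁ t₂ h₁ h₂ => simp only [smul_add, map_add, h₁, h₂]
  | tmul s' m => simp [smul_tmul']

theorem AlgHom.rTensor_mul {K S T M : Type*} [CommSemiring K] [CommSemiring S] [Algebra K S]
    [CommSemiring T] [Algebra K T] [NonUnitalNonAssocSemiring M] [Module K M]
    [SMulCommClass K M M] [IsScalarTower K M M] (f : S →ₐ[K] T) (s t : S ⊗[K] M) :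
    f.toLinearMap.rTensor M (s * t) = f.toLinearMap.rTensor M s * f.toLinearMap.rTensor M t :=
  TensorProduct.map_mul_of_map_tmul_mul_tmul _ (fun _ _ _ _ => by simp) s t

section Specialization

variable {K F : Type*} [CommRing K] [CommRing F] [Algebra K F]

def Subalgebra.rTensorRange (R : Subalgebra K F) (M : Type*) [AddCommMonoid M] [Module K M] :
    Submodule K (F ⊗[K] M) :=
  LinearMap.range (R.val.toLinearMap.rTensor M)

/-- Meant for a `K`-linear extension `φ'` of a `K`-point `φ : R →ₐ[K] K` of a subalgebra `R`:
on `R.rTensorRange M` it is `φ ⊗ id`, whichever extension is chosen. -/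
def coeffSpecialization (φ' : F →ₗ[K] K) (M : Type*) [AddCommMonoid M] [Module K M] :
    F ⊗[K] M →ₗ[K] M :=
  TensorProduct.lid K M ∘ₗ φ'.rTensor M

def specializedMap {A B : Type*} [AddCommMonoid A] [Module K A] [AddCommMonoid B] [Module K B]
    (φ' : F →ₗ[K] K) (e : F ⊗[K] A →ₗ[F] F ⊗[K] B) : A →ₗ[K] B :=
  coeffSpecialization φ' B ∘ₗ e.restrictScalars K ∘ₗ TensorProduct.mk K F A 1

variable {R : Subalgebra K F} {φ : R →ₐ[K] K} {φ' : F →ₗ[K] K}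

section Module

variable {M A B C : Type*} [AddCommMonoid M] [Module K M] [AddCommMonoid A] [Module K A]
  [AddCommMonoid B] [Module K B] [AddCommMonoid C] [Module K C]

theorem Subalgebra.exists_finset_forall_mem_rTensorRange (w : F ⊗[K] M) :
    ∃ s : Finset F, ∀ R : Subalgebra K F, ↑s ⊆ (R : Set F) → w ∈ R.rTensorRange M := by
  classical
  induction w using TensorProduct.induction_on with
  | zero => exact ⟨∅, fun R _ => zero_mem _⟩
  | tmul x m => exact ⟨{x}, fun R hR => ⟨⟨x, hR (by simp)⟩ ⊗ₜ m, rfl⟩⟩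
  | add v w hv hw =>
    obtain ⟨s, hs⟩ := hv
    obtain ⟨t, ht⟩ := hw
    refine ⟨s ∪ t, fun R hR => add_mem (hs R (subset_trans ?_ hR)) (ht R (subset_trans ?_ hR))⟩
    <;> simp

theorem Subalgebra.one_tmul_mem_rTensorRange (m : M) : (1 : F) ⊗ₜ m ∈ R.rTensorRange M :=
  ⟨1 ⊗ₜ m, rfl⟩

theorem coeffSpecialization_rTensor (hφ : φ' ∘ₗ R.val.toLinearMap = φ.toLinearMap)
    (t : R ⊗[K] M) :
    coeffSpecialization φ' M (R.val.toLinearMap.rTensor M t) =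
      TensorProduct.lid K M (φ.toLinearMap.rTensor M t) := by
  rw [coeffSpecialization, LinearMap.comp_apply, ← LinearMap.comp_apply (φ'.rTensor M),
    ← LinearMap.rTensor_comp, hφ]
  rfl

theorem coeffSpecialization_one_tmul (hφ : φ' ∘ₗ R.val.toLinearMap = φ.toLinearMap) (m : M) :
    coeffSpecialization φ' M ((1 : F) ⊗ₜ m) = m := by
  simpa using coeffSpecialization_rTensor hφ ((1 : R) ⊗ₜ m)

theorem coeffSpecialization_smul (hφ : φ' ∘ₗ R.val.toLinearMap = φ.toLinearMap) (r : R)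
    {w : F ⊗[K] M} (hw : w ∈ R.rTensorRange M) :
    coeffSpecialization φ' M ((r : F) • w) = φ r • coeffSpecialization φ' M w := by
  obtain ⟨t, rfl⟩ := hw
  have hr := R.val.rTensor_smul r t
  rw [Subalgebra.coe_val] at hr
  rw [← hr, coeffSpecialization_rTensor hφ, coeffSpecialization_rTensor hφ,
    φ.rTensor_smul, map_smul]

theorem specializedMap_apply (e : F ⊗[K] A →ₗ[F] F ⊗[K] B) (x : A) :
    specializedMap φ' e x = coeffSpecialization φ' B (e (1 ⊗ₜ x)) :=
  rfl

theorem specializedMap_coeffSpecialization (hφ : φ' ∘ₗ R.val.toLinearMap = φ.toLinearMap)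
    (e : F ⊗[K] B →ₗ[F] F ⊗[K] C) (he : ∀ y, e (1 ⊗ₜ y) ∈ R.rTensorRange C) {w : F ⊗[K] B}
    (hw : w ∈ R.rTensorRange B) :
    specializedMap φ' e (coeffSpecialization φ' B w) = coeffSpecialization φ' C (e w) := by
  obtain ⟨t, rfl⟩ := hw
  induction t using TensorProduct.induction_on with
  | zero => simp
  | add t₁ t₂ h₁ h₂ => simp only [map_add, h₁, h₂]
  | tmul r y =>
    have hry : R.val.toLinearMap.rTensor B (r ⊗ₜ y) = (r : F) • (1 : F) ⊗ₜ[K] y := by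
      simp [smul_tmul']
    rw [hry, coeffSpecialization_smul hφ r (R.one_tmul_mem_rTensorRange y),
      coeffSpecialization_one_tmul hφ, map_smul, map_smul, coeffSpecialization_smul hφ r (he y)]
    rfl

end Module

section Mul

variable {M A B : Type*}
  [NonUnitalNonAssocSemiring M] [Module K M] [SMulCommClass K M M] [IsScalarTower K M M]
  [NonUnitalNonAssocSemiring A] [Module K A] [SMulCommClass K A A] [IsScalarTower K A A]
  [NonUnitalNonAssocSemiring B] [Module K B] [SMulCommClass K B B] [IsScalarTower K B B]

theorem coeffSpecialization_mul (hφ : φ' ∘ₗ R.val.toLinearMap = φ.toLinearMap)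
    {v w : F ⊗[K] M} (hv : v ∈ R.rTensorRange M) (hw : w ∈ R.rTensorRange M) :
    coeffSpecialization φ' M (v * w) = coeffSpecialization φ' M v * coeffSpecialization φ' M w := by
  obtain ⟨s, rfl⟩ := hv
  obtain ⟨t, rfl⟩ := hw
  have hmul := TensorProduct.map_mul_of_map_tmul_mul_tmul
    (coeffSpecialization φ' M ∘ₗ R.val.toLinearMap.rTensor M) ?_ s t
  · rwa [LinearMap.comp_apply, R.val.rTensor_mul] at hmul
  · intro r m r' m'
    simp only [LinearMap.comp_apply, coeffSpecialization_rTensor hφ]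
    simp [smul_mul_smul_comm]

theorem specializedMap_mul (hφ : φ' ∘ₗ R.val.toLinearMap = φ.toLinearMap)
    {e : F ⊗[K] A →ₗ[F] F ⊗[K] B} (he : ∀ x y, e (x * y) = e x * e y)
    (hR : ∀ x, e (1 ⊗ₜ x) ∈ R.rTensorRange B) (x y : A) :
    specializedMap φ' e (x * y) = specializedMap φ' e x * specializedMap φ' e y := by
  rw [specializedMap_apply, ← one_mul (1 : F), ← Algebra.TensorProduct.tmul_mul_tmul, he,
    coeffSpecialization_mul hφ (hR x) (hR y)]
  rfl

end Mul

end Specialization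

theorem exists_mk_lt_forall_mem_rTensorRange {K F A M : Type u} [Field K] [Infinite K]
    [CommRing F] [Algebra K F] [AddCommGroup A] [Module K A] [AddCommMonoid M] [Module K M]
    (f : A →ₗ[K] F ⊗[K] M) (hA : Module.rank K A < #K) :
    ∃ E : Set F, #E < #K ∧ ∀ R : Subalgebra K F, E ⊆ R → ∀ x, f x ∈ R.rTensorRange M := by
  let b := Module.Basis.ofVectorSpace K A
  choose s hs using fun i => Subalgebra.exists_finset_forall_mem_rTensorRange (f (b i))
  refine ⟨⋃ i, (s i : Set F), mk_iUnion_finset_lt (aleph0_le_mk K) s (b.mk_eq_rank'' ▸ hA),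
    fun R hR x => ?_⟩
  have hspan : Submodule.span K (Set.range b) ≤ (R.rTensorRange M).comap f :=
    Submodule.span_le.2 <| Set.range_subset_iff.2 fun i =>
      hs i R ((Set.subset_iUnion (fun i => (s i : Set F)) i).trans hR)
  exact hspan (b.span_eq ▸ Submodule.mem_top)

section Descent

variable {K F A B : Type u} [Field K] [Field F] [Algebra K F]
  [NonUnitalNonAssocRing A] [Module K A] [SMulCommClass K A A] [IsScalarTower K A A]
  [NonUnitalNonAssocRing B] [Module K B] [SMulCommClass K B B] [IsScalarTower K B B]

theorem LinearEquiv.baseChange_map_mul {g : A ≃ₗ[K] B} (hg : ∀ x y, g (x * y) = g x * g y)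
    (x y : F ⊗[K] A) :
    g.baseChange K F A B (x * y) = g.baseChange K F A B x * g.baseChange K F A B y :=
  TensorProduct.map_mul_of_map_tmul_mul_tmul _ (fun _ _ _ _ => by simp [hg]) x y

theorem exists_mul_linearEquiv_of_baseChange [IsAlgClosed K] (hA : Module.rank K A < #K)
    (hB : Module.rank K B < #K) (e : F ⊗[K] A ≃ₗ[F] F ⊗[K] B)
    (he : ∀ x y, e (x * y) = e x * e y) : ∃ g : A ≃ₗ[K] B, ∀ x y, g (x * y) = g x * g y := by
  obtain ⟨E₁, hE₁, hAB⟩ := exists_mk_lt_forall_mem_rTensorRange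
    ((e.restrictScalars K).toLinearMap ∘ₗ TensorProduct.mk K F A 1) hA
  obtain ⟨E₂, hE₂, hBA⟩ := exists_mk_lt_forall_mem_rTensorRange
    ((e.symm.restrictScalars K).toLinearMap ∘ₗ TensorProduct.mk K F B 1) hB
  obtain ⟨φ⟩ := nonempty_algHom_adjoin_of_mk_lt
    ((mk_union_le E₁ E₂).trans_lt (add_lt_of_lt (aleph0_le_mk K) hE₁ hE₂))
  set R := Algebra.adjoin K (E₁ ∪ E₂)
  obtain ⟨π, hπ⟩ := R.val.toLinearMap.exists_leftInverse_of_injective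
    (LinearMap.ker_eq_bot.2 Subtype.val_injective)
  set φ' := φ.toLinearMap ∘ₗ π
  have hφ : φ' ∘ₗ R.val.toLinearMap = φ.toLinearMap := by
    rw [LinearMap.comp_assoc, hπ, LinearMap.comp_id]
  have hAB' : ∀ x, e (1 ⊗ₜ x) ∈ R.rTensorRange B :=
    hAB R (Set.subset_union_left.trans Algebra.subset_adjoin)
  have hBA' : ∀ y, e.symm (1 ⊗ₜ y) ∈ R.rTensorRange A :=
    hBA R (Set.subset_union_right.trans Algebra.subset_adjoin)
  refine ⟨.ofLinearMap (specializedMap φ' e.toLinearMap) (specializedMap φ' e.symm.toLinearMap)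
    ?_ ?_, specializedMap_mul hφ he hAB'⟩
  · ext y
    simp [specializedMap_apply, specializedMap_coeffSpecialization hφ _ hAB' (hBA' y),
      coeffSpecialization_one_tmul hφ]
  · ext x
    simp [specializedMap_apply, specializedMap_coeffSpecialization hφ _ hBA' (hAB' x),
      coeffSpecialization_one_tmul hφ]

theorem exists_mul_linearEquiv_baseChange_iff [IsAlgClosed K] (hA : Module.rank K A < #K)
    (hB : Module.rank K B < #K) :
    (∃ e : F ⊗[K] A ≃ₗ[F] F ⊗[K] B, ∀ x y, e (x * y) = e x * e y) ↔
      ∃ g : A ≃ₗ[K] B, ∀ x y, g (x * y) = g x * g y :=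
  ⟨fun ⟨e, he⟩ => exists_mul_linearEquiv_of_baseChange hA hB e he,
    fun ⟨g, hg⟩ => ⟨g.baseChange K F A B, LinearEquiv.baseChange_map_mul hg⟩⟩

end Descent

/-- Let `F₁`, `F₂` be fields containing an algebraically closed field `K`, and let
`A`, `B` be `K`-algebras of the same dimension `ω` with `|K| > ω`. Then
`A ⊗_K F₁ ≅ B ⊗_K F₁` as `F₁`-algebras iff `A ⊗_K F₂ ≅ B ⊗_K F₂` as `F₂`-algebras. -/
theorem stmt17 (K F₁ F₂ : Type u) [Field K] [IsAlgClosed K]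
    [Field F₁] [Algebra K F₁] [Field F₂] [Algebra K F₂]
    (A B : Type u)
    [NonUnitalNonAssocRing A] [Module K A] [SMulCommClass K A A] [IsScalarTower K A A]
    [NonUnitalNonAssocRing B] [Module K B] [SMulCommClass K B B] [IsScalarTower K B B]
    (ω : Cardinal.{u}) (hA : Module.rank K A = ω) (hB : Module.rank K B = ω)
    (hK : ω < Cardinal.mk K) :
    (∃ e : (F₁ ⊗[K] A) ≃ₗ[F₁] (F₁ ⊗[K] B), ∀ x y, e (x * y) = e x * e y) ↔
      ∃ e : (F₂ ⊗[K] A) ≃ₗ[F₂] (F₂ ⊗[K] B), ∀ x y, e (x * y) = e x * e y := by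
  subst hA
  rw [exists_mul_linearEquiv_baseChange_iff hK (hB ▸ hK),
    exists_mul_linearEquiv_baseChange_iff hK (hB ▸ hK)]
end
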